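/- arXiv:1611.01096 — 3 statements merged into one kernel-verified Lean document; each statement's English description precedes it below -/
import Mathlib

section
/- Under the DCSBM setup, almost surely max_{1≤i≤n} |q_i − d_i/√(d^T 1_n)| → 0 as n → ∞, where d = A^{(n)} 1_n is the degree vector; i.e. the quantities q̂_i = d_i/√(Σ_{j,k} A^{(n)}_{jk}) are uniformly consistent estimators of the intrinsic weights q_i. -/
open MeasureTheory ProbabilityTheory Filter Matrix
open scoped ENNReal NNReal Classical BigOperators

noncomputable section

/-- The ℓ²→ℓ² operator norm of a real square matrix. -/
noncomputable def matOpNorm {n : ℕ} (B : Matrix (Fin n) (Fin n) ℝ) : ℝ :=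
  ‖LinearMap.toContinuousLinearMap (Matrix.toEuclideanLin B)‖

/-- The eigenvalues of a real square matrix (those of its self-adjoint part if it is symmetric,
junk value `0` otherwise). -/
noncomputable def eigs {n : ℕ} (B : Matrix (Fin n) (Fin n) ℝ) : Fin n → ℝ :=
  if h : B.IsHermitian then h.eigenvalues else fun _ => 0

/-- The empirical spectral distribution of a real symmetric matrix. -/
noncomputable def specMeasure {n : ℕ} (B : Matrix (Fin n) (Fin n) ℝ) : Measure ℝ :=
  ((n : ℝ≥0∞))⁻¹ • ∑ i : Fin n, Measure.dirac (eigs B i)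

/-- Support of a measure on ℝ. -/
def mSupp (ν : Measure ℝ) : Set ℝ := {x : ℝ | ∀ U ∈ nhds x, ν U ≠ 0}

/-- Denominator appearing in the fixed-point system characterizing the limiting
Stieltjes transform. -/
noncomputable def denomC (α : ℝ) (z E1 E2 : ℂ) (q : ℝ) : ℂ :=
  -z - E1 * ((q ^ (1 - 2*α) : ℝ) : ℂ) + E2 * ((q ^ (2 - 2*α) : ℝ) : ℂ)

/-- The fixed-point system at `z ∈ ℂ⁺` : `(E1, E2) ∈ (ℂ⁺)²`,
`E1 = ∫ q^{1−2α}/(−z − E1 q^{1−2α} + E2 q^{2−2α}) dμ(q)` and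
`E2 = ∫ q^{2−2α}/(−z − E1 q^{1−2α} + E2 q^{2−2α}) dμ(q)`,
with μ-a.e. nonzero denominators. -/
def IsFixedPoint (α : ℝ) (μ : Measure ℝ) (z E1 E2 : ℂ) : Prop :=
  0 < E1.im ∧ 0 < E2.im ∧ (∀ᵐ q ∂μ, denomC α z E1 E2 q ≠ 0) ∧
  E1 = ∫ q, ((q ^ (1 - 2*α) : ℝ) : ℂ) / denomC α z E1 E2 q ∂μ ∧
  E2 = ∫ q, ((q ^ (2 - 2*α) : ℝ) : ℂ) / denomC α z E1 E2 q ∂μ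

/-- The Degree-Corrected Stochastic Block Model (DCSBM) setup: `K ≥ 1` classes with
limiting proportions `c` and symmetric affinity matrix `M`, i.i.d. intrinsic weights
`(q_i)` with compactly supported law `μ ⊆ (0,1)`, and (built from auxiliary i.i.d.
uniform variables `ξ_{ij}` independent of the weights) a symmetric adjacency matrix with
zero diagonal whose entries are, conditionally on the weights, independent Bernoulli
with parameters `P_{ij} = q_i q_j (1 + M_{g(i)g(j)}/√n) ∈ (0,1)`. -/
structure DCSBM (Ω : Type*) [MeasurableSpace Ω] where
  /-- number of classes -/
  K : ℕ
  hK : 1 ≤ K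
  /-- law of the intrinsic weights -/
  μ : Measure ℝ
  hμ_prob : IsProbabilityMeasure μ
  /-- a compact set carrying μ -/
  suppSet : Set ℝ
  h_supp_compact : IsCompact suppSet
  h_supp_sub : suppSet ⊆ Set.Ioo 0 1
  h_supp_full : μ suppSetᶜ = 0
  /-- limiting class proportions -/
  c : Fin K → ℝ
  hc_pos : ∀ k, 0 < c k
  hc_sum : ∑ k, c k = 1
  /-- class affinity matrix -/
  M : Matrix (Fin K) (Fin K) ℝ
  hM_symm : M.IsSymm
  /-- class assignment -/
  g : ℕ → Fin K
  hg : ∀ k, Filter.Tendsto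
      (fun n => (((Finset.range n).filter (fun i => g i = k)).card : ℝ) / n)
      Filter.atTop (nhds (c k))
  /-- probability measure of the underlying space -/
  P : Measure Ω
  hP : IsProbabilityMeasure P
  /-- intrinsic weights -/
  q : ℕ → Ω → ℝ
  hq_meas : ∀ i, Measurable (q i)
  /-- auxiliary i.i.d. uniform variables generating the conditionally Bernoulli edges -/
  ξ : ℕ → ℕ → Ω → ℝ
  hξ_meas : ∀ i j, Measurable (ξ i j)
  h_indep : iIndepFun
      (Sum.elim q fun p : ℕ × ℕ => ξ p.1 p.2 : ℕ ⊕ ℕ × ℕ → Ω → ℝ) P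
  h_q_law : ∀ i, P.map (q i) = μ
  h_ξ_law : ∀ i j, P.map (ξ i j) = volume.restrict (Set.Icc (0:ℝ) 1)
  h_P_range : ∀ n i j : ℕ, i ≠ j →
      ∀ᵐ ω ∂P, 0 < q i ω * q j ω * (1 + M (g i) (g j) / Real.sqrt n) ∧
        q i ω * q j ω * (1 + M (g i) (g j) / Real.sqrt n) < 1

namespace DCSBM

variable {Ω : Type*} [MeasurableSpace Ω] (S : DCSBM Ω)

/-- Bernoulli parameter `P_{ij} = q_i q_j (1 + M_{g(i)g(j)}/√n)`. -/
noncomputable def Pber (n i j : ℕ) (ω : Ω) : ℝ :=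
  S.q i ω * S.q j ω * (1 + S.M (S.g i) (S.g j) / Real.sqrt n)

/-- The adjacency matrix of the DCSBM graph on `n` vertices: symmetric, zero diagonal,
with entries `A_{ij} = 1_{ξ_{ij} ≤ P_{ij}}` for `i < j`, so that conditionally on the
weights the entries are independent Bernoulli(`P_{ij}`). -/
noncomputable def A (n : ℕ) (ω : Ω) : Matrix (Fin n) (Fin n) ℝ :=
  Matrix.of fun i j =>
    if (i : ℕ) < (j : ℕ) then (if S.ξ i j ω ≤ S.Pber n i j ω then 1 else 0)
    else if (j : ℕ) < (i : ℕ) then (if S.ξ j i ω ≤ S.Pber n j i ω then 1 else 0)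
    else 0

/-- Degree vector `d = A 1_n`. -/
noncomputable def deg (n : ℕ) (ω : Ω) (i : Fin n) : ℝ := ∑ j, S.A n ω i j

/-- The normalized modularity-type matrix
`L_α = (2m)^α n^{-1/2} D^{-α} (A - d dᵀ/(2m)) D^{-α}`. -/
noncomputable def L (α : ℝ) (n : ℕ) (ω : Ω) : Matrix (Fin n) (Fin n) ℝ :=
  ((∑ i, S.deg n ω i) ^ α / Real.sqrt n) •
    (Matrix.diagonal (fun i => S.deg n ω i ^ (-α)) *
      (S.A n ω - (∑ i, S.deg n ω i)⁻¹ • Matrix.vecMulVec (S.deg n ω) (S.deg n ω)) *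
      Matrix.diagonal (fun i => S.deg n ω i ^ (-α)))

/-- Centered adjacency matrix `X = A − E[A | q]`. -/
noncomputable def Xc (n : ℕ) (ω : Ω) : Matrix (Fin n) (Fin n) ℝ :=
  Matrix.of fun i j => if i = j then 0 else S.A n ω i j - S.Pber n i j ω

end DCSBM

open Real Filter Topology

/-! Conditionally on the weights, row `i` of `A` is a sum of independent Bernoulli variables
`1{ξ ≤ P_ij}`, so Hoeffding's inequality, applied for each frozen value of the weight sequence
(which is independent of the `ξ`), gives `P(|d_i - ∑_{j≠i} P_ij| ≥ εn) ≤ 2 exp(-2ε²(n-1))`.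
A union bound over the rows and Borel–Cantelli make all rows eventually satisfy this, almost
surely. As `P_ij = q_i q_j + O(1/√n)`, uniformly `d_i = q_i ∑_j q_j + o(n)`, hence
`∑_i d_i = (∑_j q_j)² + o(n²)`; since the support of `μ` is bounded away from `0`,
`∑_j q_j ≥ a n`, and `d_i / √(∑ d) = q_i + o(1)` uniformly in `i`. -/

lemma MeasurableSpace.comap_pi_eq_iSup {Ω ι β : Type*} [MeasurableSpace β] (f : ι → Ω → β) :
    MeasurableSpace.pi.comap (fun ω i => f i ω) =
      ⨆ i, MeasurableSpace.comap (f i) inferInstance := by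
  simp only [MeasurableSpace.pi, MeasurableSpace.comap_iSup, MeasurableSpace.comap_comp]
  rfl

namespace ProbabilityTheory

variable {Ω : Type*} [MeasurableSpace Ω] {μ : Measure Ω}

lemma iIndepFun.indepFun_sumElim {ι κ β : Type*} [MeasurableSpace β] {f : ι → Ω → β}
    {g : κ → Ω → β} (h : iIndepFun (Sum.elim f g) μ) (hf : ∀ i, Measurable (f i))
    (hg : ∀ k, Measurable (g k)) :
    IndepFun (fun ω i => f i ω) (fun ω k => g k ω) μ := by
  have hdisj : Disjoint (Set.range (Sum.inl : ι → ι ⊕ κ)) (Set.range Sum.inr) :=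
    Set.disjoint_left.2 fun _ ⟨i, hi⟩ ⟨k, hk⟩ => Sum.inl_ne_inr (hi.trans hk.symm)
  have := indep_iSup_of_disjoint (fun k => (measurable_iff_comap_le.1
    (Sum.rec hf hg k : Measurable (Sum.elim f g k)))) h.iIndep hdisj
  rw [iSup_range, iSup_range] at this
  rwa [IndepFun_iff_Indep, MeasurableSpace.comap_pi_eq_iSup, MeasurableSpace.comap_pi_eq_iSup]

lemma IndepFun.measure_prodMk_mem_le {α β : Type*} [MeasurableSpace α] [MeasurableSpace β]
    [IsProbabilityMeasure μ] {X : Ω → α} {Y : Ω → β} (hXY : IndepFun X Y μ)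
    (hX : Measurable X) (hY : Measurable Y) {B : Set (α × β)} (hB : MeasurableSet B)
    {c : ℝ≥0∞} (h : ∀ᵐ ω ∂μ, μ {ω' | (X ω, Y ω') ∈ B} ≤ c) :
    μ {ω | (X ω, Y ω) ∈ B} ≤ c :=
  calc μ {ω | (X ω, Y ω) ∈ B} = (μ.map X).prod (μ.map Y) B := by
        rw [← (indepFun_iff_map_prod_eq_prod_map_map hX.aemeasurable hY.aemeasurable).1 hXY,
          Measure.map_apply (hX.prodMk hY) hB]
        rfl
    _ = ∫⁻ ω, μ {ω' | (X ω, Y ω') ∈ B} ∂μ := by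
        rw [Measure.prod_apply hB, lintegral_map (measurable_measure_prodMk_left hB) hX]
        congr! 2 with ω
        exact Measure.map_apply hY (measurable_prodMk_left hB)
    _ ≤ ∫⁻ _, c ∂μ := lintegral_mono_ae h
    _ = c := by simp

lemma measureReal_le_abs_sum_sub_integral_le [IsProbabilityMeasure μ] {ι : Type*}
    {X : ι → Ω → ℝ} (h_indep : iIndepFun X μ) (hX : ∀ i, Measurable (X i))
    (h01 : ∀ i, ∀ᵐ ω ∂μ, X i ω ∈ Set.Icc 0 1) (s : Finset ι) {ε : ℝ} (hε : 0 ≤ ε) :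
    μ.real {ω | ε * s.card ≤ |∑ i ∈ s, (X i ω - μ[X i])|} ≤
      2 * exp (-2 * ε ^ 2 * s.card) := by
  have hsubG : ∀ i, HasSubgaussianMGF (fun ω => X i ω - μ[X i]) (1 / 4) μ := fun i => by
    convert hasSubgaussianMGF_of_mem_Icc (hX i).aemeasurable (h01 i)
    norm_num
  have hindep : iIndepFun (fun i ω => X i ω - μ[X i]) μ :=
    h_indep.comp (fun i (x : ℝ) => x - ∫ ω, X i ω ∂μ) fun i => measurable_id.sub_const _
  have hexp : -(ε * s.card) ^ 2 / (2 * ((∑ _i ∈ s, (1 / 4 : ℝ≥0) : ℝ≥0) : ℝ)) =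
      -2 * ε ^ 2 * s.card := by
    rcases (s.card.cast_nonneg (α := ℝ)).eq_or_lt with h | h
    · simp [← h]
    · simp only [Finset.sum_const, nsmul_eq_mul, NNReal.coe_mul, NNReal.coe_natCast,
        NNReal.coe_div, NNReal.coe_one, NNReal.coe_ofNat]
      field_simp
      ring
  have hupper := HasSubgaussianMGF.measure_sum_ge_le_of_iIndepFun (s := s) hindep
    (fun i _ => hsubG i) (mul_nonneg hε s.card.cast_nonneg)
  have hlower := HasSubgaussianMGF.measure_sum_ge_le_of_iIndepFun (s := s)
    (hindep.comp (fun _ => Neg.neg) fun _ => measurable_neg) (fun i _ => (hsubG i).neg)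
    (mul_nonneg hε s.card.cast_nonneg)
  rw [hexp] at hupper hlower
  simp only [Function.comp_apply, Finset.sum_neg_distrib] at hlower
  calc μ.real {ω | ε * s.card ≤ |∑ i ∈ s, (X i ω - μ[X i])|}
      ≤ μ.real ({ω | ε * s.card ≤ ∑ i ∈ s, (X i ω - μ[X i])} ∪
          {ω | ε * s.card ≤ -∑ i ∈ s, (X i ω - μ[X i])}) :=
        measureReal_mono fun _ hω => le_abs.1 (Set.mem_ofPred.1 hω)
    _ ≤ 2 * exp (-2 * ε ^ 2 * s.card) := by
        linarith [measureReal_union_le (μ := μ) {ω | ε * s.card ≤ ∑ i ∈ s, (X i ω - μ[X i])}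
          {ω | ε * s.card ≤ -∑ i ∈ s, (X i ω - μ[X i])}]

lemma integral_ite_le_of_map_eq_uniform {U : Ω → ℝ} (hU : Measurable U)
    (hU_law : μ.map U = volume.restrict (Set.Icc 0 1)) {p : ℝ} (hp : p ∈ Set.Icc 0 1) :
    ∫ ω, (if U ω ≤ p then 1 else 0) ∂μ = p := by
  have h : (fun ω => if U ω ≤ p then (1 : ℝ) else 0) =
      fun ω => (Set.Iic p).indicator 1 (U ω) := by
    ext ω; simp [Set.indicator_apply]
  have hIcc : Set.Iic p ∩ Set.Icc 0 1 = Set.Icc 0 p := by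
    ext x
    simp only [Set.mem_inter_iff, Set.mem_Iic, Set.mem_Icc]
    grind
  rw [h, ← integral_map hU.aemeasurable
      (stronglyMeasurable_one.indicator measurableSet_Iic).aestronglyMeasurable, hU_law,
    integral_indicator_one measurableSet_Iic, measureReal_restrict_apply measurableSet_Iic, hIcc,
    measureReal_def, Real.volume_Icc, sub_zero, ENNReal.toReal_ofReal hp.1]

lemma measureReal_le_abs_sum_ite_le_sub_le [IsProbabilityMeasure μ] {ι : Type*}
    {U : ι → Ω → ℝ} (hU : iIndepFun U μ) (hU_meas : ∀ j, Measurable (U j))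
    (hU_law : ∀ j, μ.map (U j) = volume.restrict (Set.Icc 0 1)) (s : Finset ι) {p : ι → ℝ}
    (hp : ∀ j ∈ s, p j ∈ Set.Icc 0 1) {ε : ℝ} (hε : 0 ≤ ε) :
    μ.real {ω | ε * s.card ≤ |∑ j ∈ s, ((if U j ω ≤ p j then 1 else 0) - p j)|} ≤
      2 * exp (-2 * ε ^ 2 * s.card) := by
  have hmeas : ∀ j, Measurable fun x : ℝ => if x ≤ p j then (1 : ℝ) else 0 := fun j =>
    measurable_const.ite measurableSet_Iic measurable_const
  convert measureReal_le_abs_sum_sub_integral_le (hU.comp _ hmeas)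
    (fun j => (hmeas j).comp (hU_meas j)) (fun j => ae_of_all _ fun ω => ?_) s hε using 5 with ω
  · refine congrArg abs (Finset.sum_congr rfl fun j hj => ?_)
    simp only [Function.comp_apply,
      integral_ite_le_of_map_eq_uniform (hU_meas j) (hU_law j) (hp j hj)]
  · simp only [Function.comp_apply]
    split_ifs <;> simp

lemma measure_le_abs_sum_ite_le_sub_le_of_indepFun [IsProbabilityMeasure μ] {ι α : Type*}
    [MeasurableSpace α] {V : Ω → α} {U : ι → Ω → ℝ} (hV : Measurable V)
    (hVU : IndepFun V (fun ω j => U j ω) μ) (hU : iIndepFun U μ)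
    (hU_meas : ∀ j, Measurable (U j))
    (hU_law : ∀ j, μ.map (U j) = volume.restrict (Set.Icc 0 1)) (s : Finset ι)
    {p : ι → α → ℝ} (hp_meas : ∀ j, Measurable (p j))
    (hp : ∀ᵐ ω ∂μ, ∀ j ∈ s, p j (V ω) ∈ Set.Icc 0 1) {ε : ℝ} (hε : 0 ≤ ε) :
    μ {ω | ε * s.card ≤ |∑ j ∈ s, ((if U j ω ≤ p j (V ω) then 1 else 0) - p j (V ω))|} ≤
      ENNReal.ofReal (2 * exp (-2 * ε ^ 2 * s.card)) := by
  have hB : MeasurableSet {z : α × (ι → ℝ) |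
      ε * s.card ≤ |∑ j ∈ s, ((if z.2 j ≤ p j z.1 then 1 else 0) - p j z.1)|} := by
    refine measurableSet_le measurable_const (Finset.measurable_sum _ fun j _ => ?_).abs
    have hpj : Measurable fun z : α × (ι → ℝ) => p j z.1 := (hp_meas j).comp measurable_fst
    exact (measurable_const.ite
      (measurableSet_le ((measurable_pi_apply j).comp measurable_snd) hpj) measurable_const).sub hpj
  refine hVU.measure_prodMk_mem_le hV (measurable_pi_lambda _ hU_meas) hB ?_
  filter_upwards [hp] with ω hω
  rw [← ofReal_measureReal]
  exact ENNReal.ofReal_le_ofReal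
    (measureReal_le_abs_sum_ite_le_sub_le hU hU_meas hU_law s hω hε)

end ProbabilityTheory

lemma abs_sqrt_sub_mul_le {T s : ℝ} (hs : 0 ≤ s) : |√T - s| * s ≤ |T - s ^ 2| := by
  rcases le_or_gt 0 T with hT | hT
  · calc |√T - s| * s ≤ |√T - s| * (√T + s) := by gcongr; linarith [sqrt_nonneg T]
      _ = |T - s ^ 2| := by
        rw [← abs_of_nonneg (by positivity : 0 ≤ √T + s), ← abs_mul]
        congr 1
        linear_combination sq_sqrt hT
  -- For `T < 0` the junk value `√T = 0` still satisfies the bound, as `|T - s²| > s²`.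
  · rw [sqrt_eq_zero'.2 hT.le, zero_sub, abs_neg, abs_of_nonneg hs, abs_of_neg (by nlinarith)]
    nlinarith

lemma abs_sub_div_sqrt_sum_le {n : ℕ} {q d : Fin n → ℝ} {a δ : ℝ} (ha : 0 < a)
    (hq : ∀ j, q j ∈ Set.Icc a 1) (hδ : δ ≤ a ^ 2 / 2)
    (hd : ∀ i, |d i - q i * ∑ j, q j| ≤ δ * n) (i : Fin n) :
    |q i - d i / √(∑ j, d j)| ≤ 2 * δ * (1 + a) / a ^ 2 := by
  have hn : (0 : ℝ) < n := Nat.cast_pos.2 (Fin.pos i)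
  set s := ∑ j, q j
  set T := ∑ j, d j
  have hs : a * n ≤ s := by
    simpa [mul_comm] using Finset.card_nsmul_le_sum Finset.univ q a fun j _ => (hq j).1
  have hT : |T - s ^ 2| ≤ δ * n * n := by
    have : T - s ^ 2 = ∑ i, (d i - q i * s) := by
      rw [Finset.sum_sub_distrib, ← Finset.sum_mul, sq]
    rw [this]
    calc |∑ i, (d i - q i * s)| ≤ ∑ i, |d i - q i * s| := Finset.abs_sum_le_sum_abs _ _
      _ ≤ ∑ _i : Fin n, δ * n := Finset.sum_le_sum fun i _ => hd i
      _ = δ * n * n := by simp [mul_comm]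
  have hsqrt : |√T - s| ≤ δ / a * n := by
    rw [div_mul_eq_mul_div, le_div_iff₀ ha, ← mul_le_mul_iff_of_pos_right hn]
    calc |√T - s| * a * n = |√T - s| * (a * n) := by ring
      _ ≤ |√T - s| * s := by gcongr
      _ ≤ |T - s ^ 2| := abs_sqrt_sub_mul_le (by nlinarith)
      _ ≤ δ * n * n := hT
  have hsqrt_low : a / 2 * n ≤ √T := by
    have : δ / a ≤ a / 2 := by rw [div_le_iff₀ ha]; nlinarith
    nlinarith [neg_abs_le (√T - s)]
  have hnum : |q i * √T - d i| ≤ δ / a * n + δ * n := calc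
    |q i * √T - d i| = |q i * (√T - s) - (d i - q i * s)| := by ring_nf
    _ ≤ |q i| * |√T - s| + |d i - q i * s| := by rw [← abs_mul]; exact abs_sub _ _
    _ ≤ 1 * (δ / a * n) + δ * n := by
      gcongr
      · exact abs_le.2 ⟨by linarith [(hq i).1], (hq i).2⟩
      · exact hd i
    _ = δ / a * n + δ * n := by ring
  have hsqrt_pos : 0 < √T := lt_of_lt_of_le (by positivity) hsqrt_low
  calc |q i - d i / √T| = |q i * √T - d i| / √T := by
        rw [← abs_of_pos hsqrt_pos, ← abs_div, abs_of_pos hsqrt_pos, sub_div,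
          mul_div_cancel_right₀ _ hsqrt_pos.ne']
    _ ≤ (δ / a * n + δ * n) / (a / 2 * n) := by
        gcongr
        exact (abs_nonneg _).trans hnum
    _ = 2 * δ * (1 + a) / a ^ 2 := by field_simp

lemma tendsto_iSup_abs_sub_div_sqrt_sum {q : ℕ → ℝ} {d : (n : ℕ) → Fin n → ℝ} {a : ℝ}
    (ha : 0 < a) (hq : ∀ j, q j ∈ Set.Icc a 1)
    (hd : ∀ δ > 0, ∀ᶠ n in atTop, ∀ i : Fin n, |d n i - q i * ∑ j : Fin n, q j| ≤ δ * n) :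
    Tendsto (fun n => ⨆ i : Fin n, |q i - d n i / √(∑ j, d n j)|) atTop (𝓝 0) := by
  refine tendsto_order.2 ⟨fun b hb => Eventually.of_forall fun n =>
    hb.trans_le (Real.iSup_nonneg fun i => abs_nonneg _), fun η hη => ?_⟩
  set δ := min (a ^ 2 / 2) (η * a ^ 2 / (4 * (1 + a)))
  have hδ : 0 < δ := lt_min (by positivity) (by positivity)
  filter_upwards [hd δ hδ] with n hn
  calc ⨆ i : Fin n, |q i - d n i / √(∑ j, d n j)| ≤ 2 * δ * (1 + a) / a ^ 2 :=
        Real.iSup_le (abs_sub_div_sqrt_sum_le ha (fun j => hq j) (min_le_left _ _) hn)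
          (by positivity)
    _ ≤ 2 * (η * a ^ 2 / (4 * (1 + a))) * (1 + a) / a ^ 2 := by gcongr; exact min_le_right _ _
    _ < η := by field_simp; linarith

namespace DCSBM

open Finset

variable {Ω : Type*} [MeasurableSpace Ω] (S : DCSBM Ω)

lemma Pber_comm (n i j : ℕ) (ω : Ω) : S.Pber n i j ω = S.Pber n j i ω := by
  simp only [Pber, S.hM_symm.apply (S.g i) (S.g j), mul_comm (S.q i ω)]

lemma A_apply_of_ne {n : ℕ} {i j : Fin n} (hij : i ≠ j) (ω : Ω) :
    S.A n ω i j = if S.ξ (min (i : ℕ) j) (max (i : ℕ) j) ω ≤ S.Pber n i j ω then 1 else 0 := by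
  rcases lt_or_gt_of_ne hij with h | h
  · have h' : (i : ℕ) < j := h
    simp [A, h, min_eq_left h'.le, max_eq_right h'.le]
  · have h' : (j : ℕ) < i := h
    simp [A, h, h.not_gt, min_eq_right h'.le, max_eq_left h'.le, S.Pber_comm n j i]

lemma deg_sub_sum_Pber (n : ℕ) (ω : Ω) (i : Fin n) :
    S.deg n ω i - ∑ j ∈ univ.erase i, S.Pber n i j ω =
      ∑ j ∈ univ.erase i,
        ((if S.ξ (min (i : ℕ) j) (max (i : ℕ) j) ω ≤ S.Pber n i j ω then 1 else 0) -
          S.Pber n i j ω) := by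
  have hAii : S.A n ω i i = 0 := by simp [A]
  rw [deg, ← sum_erase_add _ _ (mem_univ i), hAii, add_zero, ← sum_sub_distrib]
  exact sum_congr rfl fun j hj => by rw [A_apply_of_ne S (ne_of_mem_erase hj).symm]

lemma indepFun_q_ξ :
    IndepFun (fun ω k => S.q k ω) (fun ω (p : ℕ × ℕ) => S.ξ p.1 p.2 ω) S.P :=
  S.h_indep.indepFun_sumElim S.hq_meas fun p => S.hξ_meas p.1 p.2

lemma measure_le_abs_deg_sub_sum_Pber_le (n : ℕ) (i : Fin n) {ε : ℝ} (hε : 0 ≤ ε) :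
    S.P {ω | ε * (n - 1 : ℕ) ≤ |S.deg n ω i - ∑ j ∈ univ.erase i, S.Pber n i j ω|} ≤
      ENNReal.ofReal (2 * exp (-2 * ε ^ 2 * (n - 1 : ℕ))) := by
  have := S.hP
  have hcard : (univ.erase i).card = n - 1 := by simp
  have hinj : Function.Injective fun j : Fin n =>
      (Sum.inr (min (i : ℕ) j, max (i : ℕ) j) : ℕ ⊕ ℕ × ℕ) := fun j j' h => by
    simp only [Sum.inr.injEq, Prod.mk.injEq] at h
    have := congrArg₂ (· + ·) h.1 h.2
    simp only [min_add_max, add_right_inj] at this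
    exact Fin.val_injective this
  have hp : ∀ᵐ ω ∂S.P, ∀ j ∈ univ.erase i, S.Pber n i j ω ∈ Set.Icc 0 1 := by
    refine ae_all_iff.2 fun j => ?_
    by_cases hj : j = i
    · simp [hj]
    · filter_upwards [S.h_P_range n i j (Fin.val_injective.ne (Ne.symm hj))] with ω hω _
      exact ⟨hω.1.le, hω.2.le⟩
  simp_rw [deg_sub_sum_Pber, ← hcard]
  exact measure_le_abs_sum_ite_le_sub_le_of_indepFun (measurable_pi_lambda _ S.hq_meas)
    (S.indepFun_q_ξ.comp measurable_id (measurable_pi_lambda _ fun j => measurable_pi_apply _))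
    (S.h_indep.precomp hinj) (fun j => S.hξ_meas _ _) (fun j => S.h_ξ_law _ _) _
    (p := fun j x => x i * x j * (1 + S.M (S.g i) (S.g j) / √n)) (fun j => by fun_prop) hp hε

lemma ae_eventually_abs_deg_sub_sum_Pber_lt {ε : ℝ} (hε : 0 < ε) :
    ∀ᵐ ω ∂S.P, ∀ᶠ n in atTop, ∀ i : Fin n,
      |S.deg n ω i - ∑ j ∈ univ.erase i, S.Pber n i j ω| < ε * n := by
  set r := 2 * ε ^ 2
  have hbad : ∀ n : ℕ, S.P {ω | ∃ i : Fin n,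
      ε * n ≤ |S.deg n ω i - ∑ j ∈ univ.erase i, S.Pber n i j ω|} ≤
        ENNReal.ofReal (n * (2 * exp (-r * (n - 1 : ℕ)))) := fun n => calc
    _ ≤ S.P (⋃ i : Fin n, {ω | ε * (n - 1 : ℕ) ≤
          |S.deg n ω i - ∑ j ∈ univ.erase i, S.Pber n i j ω|}) := by
      refine measure_mono fun ω ⟨i, hi⟩ => Set.mem_iUnion.2 ⟨i, le_trans ?_ hi⟩
      gcongr
      exact_mod_cast n.sub_le 1
    _ ≤ ∑ i : Fin n, S.P {ω | ε * (n - 1 : ℕ) ≤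
          |S.deg n ω i - ∑ j ∈ univ.erase i, S.Pber n i j ω|} := measure_iUnion_fintype_le _ _
    _ ≤ ∑ _i : Fin n, ENNReal.ofReal (2 * exp (-r * (n - 1 : ℕ))) := by
      gcongr with i
      simpa [r, mul_assoc] using S.measure_le_abs_deg_sub_sum_Pber_le n i hε.le
    _ = ENNReal.ofReal (n * (2 * exp (-r * (n - 1 : ℕ)))) := by
      simp [ENNReal.ofReal_mul]
  have hsum : Summable fun n : ℕ => n * (2 * exp (-r * (n - 1 : ℕ))) := by
    refine .of_nonneg_of_le (fun n => by positivity) (fun n => ?_)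
      (((summable_pow_mul_exp_neg_nat_mul 1 (by positivity : 0 < r)).mul_left
        (2 * exp r)))
    have : (n : ℝ) - 1 ≤ (n - 1 : ℕ) := by rcases n with _ | n <;> simp
    calc (n : ℝ) * (2 * exp (-r * (n - 1 : ℕ))) ≤ n * (2 * exp (-r * (n - 1))) := by
          gcongr ?_ * (2 * exp ?_)
          nlinarith [mul_le_mul_of_nonneg_left this (by positivity : 0 ≤ r)]
    _ = 2 * exp r * (n ^ 1 * exp (-r * n)) := by
          rw [show -r * ((n : ℝ) - 1) = r + -r * n by ring, exp_add]
          ring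
  have hfin : ∑' n, S.P {ω | ∃ i : Fin n,
      ε * n ≤ |S.deg n ω i - ∑ j ∈ univ.erase i, S.Pber n i j ω|} ≠ ⊤ :=
    ne_top_of_le_ne_top ENNReal.ofReal_ne_top ((ENNReal.tsum_le_tsum hbad).trans_eq
      (ENNReal.ofReal_tsum_of_nonneg (fun n => by positivity) hsum).symm)
  filter_upwards [ae_eventually_notMem hfin] with ω hω
  filter_upwards [hω] with n hn i
  exact not_le.1 fun h => hn ⟨i, h⟩

lemma exists_pos_le_of_mem_suppSet : ∃ a, 0 < a ∧ ∀ x ∈ S.suppSet, a ≤ x := by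
  rcases S.suppSet.eq_empty_or_nonempty with h | h
  · exact ⟨1, one_pos, by simp [h]⟩
  · obtain ⟨a, ha, hmin⟩ := S.h_supp_compact.exists_isLeast h
    exact ⟨a, (S.h_supp_sub ha).1, fun x hx => hmin hx⟩

lemma ae_q_mem_suppSet : ∀ᵐ ω ∂S.P, ∀ i, S.q i ω ∈ S.suppSet := by
  refine ae_all_iff.2 fun i => ae_of_ae_map (S.hq_meas i).aemeasurable ?_
  rw [S.h_q_law i]
  filter_upwards [measure_eq_zero_iff_ae_notMem.1 S.h_supp_full] with x hx
  exact not_not.1 hx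

lemma abs_sum_Pber_sub_mul_sum_le {n : ℕ} {ω : Ω} (hq : ∀ j, S.q j ω ∈ Set.Icc 0 1) {C : ℝ}
    (hC : ∀ k l, |S.M k l| ≤ C) (i : Fin n) :
    |∑ j ∈ univ.erase i, S.Pber n i j ω - S.q i ω * ∑ j : Fin n, S.q j ω| ≤
      n * (C / √n) + 1 := by
  have hqq : ∀ j k, |S.q j ω * S.q k ω| ≤ 1 := fun j k => by
    rw [abs_of_nonneg (mul_nonneg (hq j).1 (hq k).1)]
    exact mul_le_one₀ (hq j).2 (hq k).1 (hq k).2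
  have hP : ∀ j : Fin n, |S.Pber n i j ω - S.q i ω * S.q j ω| ≤ C / √n := fun j => calc
    _ = |S.q i ω * S.q j ω| * (|S.M (S.g i) (S.g j)| / √n) := by
      rw [← abs_of_nonneg (sqrt_nonneg (n : ℝ)), ← abs_div, ← abs_mul, Pber]
      ring_nf
    _ ≤ 1 * (C / √n) := by gcongr; exacts [hqq _ _, hC _ _]
    _ = C / √n := one_mul _
  have hsplit : ∑ j ∈ univ.erase i, S.Pber n i j ω - S.q i ω * ∑ j : Fin n, S.q j ω =
      ∑ j ∈ univ.erase i, (S.Pber n i j ω - S.q i ω * S.q j ω) - S.q i ω * S.q i ω := by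
    rw [mul_sum, ← sum_erase_add _ _ (mem_univ i), sum_sub_distrib]
    ring
  calc _ ≤ ∑ j ∈ univ.erase i, |S.Pber n i j ω - S.q i ω * S.q j ω| + 1 := by
        rw [hsplit]
        exact (abs_sub _ _).trans (add_le_add (abs_sum_le_sum_abs _ _) (hqq _ _))
    _ ≤ ∑ j : Fin n, |S.Pber n i j ω - S.q i ω * S.q j ω| + 1 := by
        gcongr
        exact erase_subset _ _
    _ ≤ n * (C / √n) + 1 := by
        gcongr
        simpa using sum_le_sum fun j (_ : j ∈ univ) => hP j

lemma ae_eventually_abs_deg_sub_mul_sum_le {δ : ℝ} (hδ : 0 < δ) :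
    ∀ᵐ ω ∂S.P, ∀ᶠ n in atTop, ∀ i : Fin n,
      |S.deg n ω i - S.q i ω * ∑ j : Fin n, S.q j ω| ≤ δ * n := by
  obtain ⟨C, hC⟩ := (Set.finite_range fun p : Fin S.K × Fin S.K => |S.M p.1 p.2|).bddAbove
  have hC_sqrt : Tendsto (fun n : ℕ => C / √n) atTop (𝓝 0) :=
    tendsto_const_nhds.div_atTop
      (tendsto_sqrt_atTop.comp tendsto_natCast_atTop_atTop)
  filter_upwards [S.ae_eventually_abs_deg_sub_sum_Pber_lt (half_pos hδ), S.ae_q_mem_suppSet]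
    with ω hdev hq
  have hδ4 : (0 : ℝ) < δ / 4 := by positivity
  filter_upwards [hdev, hC_sqrt.eventually (ge_mem_nhds hδ4),
    (tendsto_natCast_atTop_atTop.const_mul_atTop hδ4).eventually_ge_atTop 1] with n hdev hCn hn i
  have hPq := S.abs_sum_Pber_sub_mul_sum_le
    (fun j => Set.Ioo_subset_Icc_self (S.h_supp_sub (hq j))) (fun k l => hC ⟨(k, l), rfl⟩) i
  calc _ ≤ |S.deg n ω i - ∑ j ∈ univ.erase i, S.Pber n i j ω| +
        |∑ j ∈ univ.erase i, S.Pber n i j ω - S.q i ω * ∑ j : Fin n, S.q j ω| :=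
        abs_sub_le _ _ _
    _ ≤ δ / 2 * n + (n * (δ / 4) + δ / 4 * n) := by
        gcongr
        · exact (hdev i).le
        · exact hPq.trans (by gcongr)
    _ = δ * n := by ring

end DCSBM

/-- uniform consistency of the degree-based estimators of the intrinsic
weights: almost surely, `max_{1≤i≤n} |q_i − d_i/√(dᵀ1_n)| → 0`. -/
theorem statement0 {Ω : Type*} [MeasurableSpace Ω] (S : DCSBM Ω) :
    ∀ᵐ ω ∂S.P, Filter.Tendsto
      (fun n : ℕ => ⨆ i : Fin n,
        |S.q i ω - S.deg n ω i / Real.sqrt (∑ j, S.deg n ω j)|)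
      Filter.atTop (nhds 0) := by
  obtain ⟨a, ha, haS⟩ := S.exists_pos_le_of_mem_suppSet
  have hdev : ∀ k : ℕ, ∀ᵐ ω ∂S.P, ∀ᶠ n in atTop, ∀ i : Fin n,
      |S.deg n ω i - S.q i ω * ∑ j : Fin n, S.q j ω| ≤ 1 / (k + 1) * n := fun k =>
    S.ae_eventually_abs_deg_sub_mul_sum_le Nat.one_div_pos_of_nat
  filter_upwards [S.ae_q_mem_suppSet, ae_all_iff.2 hdev] with ω hq hdev
  refine tendsto_iSup_abs_sub_div_sqrt_sum (q := fun j => S.q j ω) (d := fun n => S.deg n ω)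
    ha (fun j => ⟨haS _ (hq j), (S.h_supp_sub (hq j)).2.le⟩) fun δ hδ => ?_
  obtain ⟨k, hk⟩ := exists_nat_one_div_lt hδ
  filter_upwards [hdev k] with n hn i
  exact (hn i).trans (by gcongr)
end
end

section
/- Let ν be a Borel probability measure on ℝ with compact support contained in [−R, R], and let m(x) = ∫ (t − x)^{−1} dν(t) denote its Stieltjes transform for real x with |x| > R. If m(−x) = −m(x) for all real x with |x| > R, then ν is symmetric: the pushforward of ν under t ↦ −t equals ν; in particular ν([a,b]) = ν([−b,−a]) for all a ≤ b. -/
/-!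
Write `Fₙ(x) = ∫ tⁿ (t - x)⁻¹ dρ(t)` for a finite measure `ρ` supported in `[-R, R]` and `x > R`.
Then `Fₙ₊₁(x) = ∫ tⁿ dρ + x Fₙ(x)` and `Fₙ(x) → 0` as `x → ∞`, so if two such measures have
eventually equal Stieltjes transforms `F₀`, induction on `n` shows that all the `Fₙ`, and hence
all the moments, agree. By Weierstrass approximation the moments determine the integrals of
continuous functions, hence the measure. The hypothesis `m(-x) = -m(x)` says precisely that `ν`
and its reflection under `t ↦ -t` have the same Stieltjes transform.
-/

open MeasureTheory Filter Topology Set Polynomial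

lemma integrable_of_ae_mem_of_continuousOn {X E : Type*} [TopologicalSpace X] [T2Space X]
    [MeasurableSpace X] [OpensMeasurableSpace X] [NormedAddCommGroup E] {ρ : Measure X}
    [IsFiniteMeasure ρ] {K : Set X} (hK : IsCompact K) (hρ : ∀ᵐ t ∂ρ, t ∈ K) {g : X → E}
    (hg : ContinuousOn g K) : Integrable g ρ := by
  have := hg.integrableOn_compact (μ := ρ) hK
  rwa [IntegrableOn, Measure.restrict_eq_self_of_ae_mem hρ] at this

section StieltjesTransform

variable {ρ μ ν : Measure ℝ} {R : ℝ}

lemma continuousOn_pow_mul_inv_sub {x : ℝ} (hx : R < x) (n : ℕ) :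
    ContinuousOn (fun t : ℝ => t ^ n * (t - x)⁻¹) (Icc (-R) R) :=
  (continuousOn_pow n).mul <| (continuousOn_id.sub continuousOn_const).inv₀
    fun _ ht => sub_ne_zero.2 (ht.2.trans_lt hx).ne

lemma integral_pow_succ_mul_inv_sub [IsFiniteMeasure ρ] (hρ : ∀ᵐ t ∂ρ, t ∈ Icc (-R) R)
    {x : ℝ} (hx : R < x) (n : ℕ) :
    ∫ t, t ^ (n + 1) * (t - x)⁻¹ ∂ρ = ∫ t, t ^ n ∂ρ + x * ∫ t, t ^ n * (t - x)⁻¹ ∂ρ := by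
  have hpoint : ∀ᵐ t ∂ρ, t ^ (n + 1) * (t - x)⁻¹ = t ^ n + x * (t ^ n * (t - x)⁻¹) := by
    filter_upwards [hρ] with t ht
    have : t - x ≠ 0 := sub_ne_zero.2 (ht.2.trans_lt hx).ne
    field_simp
    ring
  rw [integral_congr_ae hpoint, integral_add, integral_const_mul]
  · exact integrable_of_ae_mem_of_continuousOn isCompact_Icc hρ (continuousOn_pow n)
  · exact (integrable_of_ae_mem_of_continuousOn isCompact_Icc hρ
      (continuousOn_pow_mul_inv_sub hx n)).const_mul x

lemma tendsto_integral_pow_mul_inv_sub_atTop [IsFiniteMeasure ρ]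
    (hρ : ∀ᵐ t ∂ρ, t ∈ Icc (-R) R) (n : ℕ) :
    Tendsto (fun x => ∫ t, t ^ n * (t - x)⁻¹ ∂ρ) atTop (𝓝 0) := by
  have hlim : Tendsto (fun x => ∫ t, t ^ n * (t - x)⁻¹ ∂ρ) atTop (𝓝 (∫ _, (0 : ℝ) ∂ρ)) := by
    refine tendsto_integral_filter_of_dominated_convergence (fun _ => R ^ n) ?_ ?_
      (integrable_const _) ?_
    · exact Eventually.of_forall fun x => by fun_prop
    · filter_upwards [eventually_ge_atTop (R + 1)] with x hx
      filter_upwards [hρ] with t ht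
      have hdist : 1 ≤ |t - x| := by
        rw [abs_sub_comm, abs_of_pos (by linarith [ht.2])]
        linarith [ht.2]
      rw [norm_mul, norm_inv, norm_pow, Real.norm_eq_abs, Real.norm_eq_abs]
      calc |t| ^ n * |t - x|⁻¹ ≤ |t| ^ n :=
            mul_le_of_le_one_right (by positivity) (inv_le_one_of_one_le₀ hdist)
        _ ≤ R ^ n := pow_le_pow_left₀ (abs_nonneg t) (abs_le.2 ht) n
    · refine Eventually.of_forall fun t => ?_
      simpa [sub_eq_add_neg] using (tendsto_inv_atBot_zero.comp
        (tendsto_atBot_add_const_left _ t tendsto_neg_atTop_atBot)).const_mul (t ^ n)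
  simpa using hlim

variable [IsFiniteMeasure μ] [IsFiniteMeasure ν]
  (hμ : ∀ᵐ t ∂μ, t ∈ Icc (-R) R) (hν : ∀ᵐ t ∂ν, t ∈ Icc (-R) R)
include hμ hν

lemma integral_pow_eq_and_eventually_eq_succ {n : ℕ}
    (h : ∀ᶠ x in atTop, ∫ t, t ^ n * (t - x)⁻¹ ∂μ = ∫ t, t ^ n * (t - x)⁻¹ ∂ν) :
    ∫ t, t ^ n ∂μ = ∫ t, t ^ n ∂ν ∧
      ∀ᶠ x in atTop, ∫ t, t ^ (n + 1) * (t - x)⁻¹ ∂μ = ∫ t, t ^ (n + 1) * (t - x)⁻¹ ∂ν := by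
  have hdiff : ∀ᶠ x in atTop, ∫ t, t ^ (n + 1) * (t - x)⁻¹ ∂μ - ∫ t, t ^ (n + 1) * (t - x)⁻¹ ∂ν
      = ∫ t, t ^ n ∂μ - ∫ t, t ^ n ∂ν := by
    filter_upwards [h, eventually_gt_atTop R] with x hx hRx
    rw [integral_pow_succ_mul_inv_sub hμ hRx, integral_pow_succ_mul_inv_sub hν hRx, hx]
    ring
  have hlim := (tendsto_integral_pow_mul_inv_sub_atTop hμ (n + 1)).sub
    (tendsto_integral_pow_mul_inv_sub_atTop hν (n + 1))
  rw [sub_zero] at hlim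
  have hmoment : ∫ t, t ^ n ∂μ - ∫ t, t ^ n ∂ν = 0 :=
    tendsto_nhds_unique tendsto_const_nhds (hlim.congr' hdiff)
  refine ⟨sub_eq_zero.1 hmoment, ?_⟩
  filter_upwards [hdiff] with x hx
  exact sub_eq_zero.1 (hx.trans hmoment)

lemma integral_pow_eq_of_eventually_stieltjes_eq
    (h : ∀ᶠ x in atTop, ∫ t, (t - x)⁻¹ ∂μ = ∫ t, (t - x)⁻¹ ∂ν) (n : ℕ) :
    ∫ t, t ^ n ∂μ = ∫ t, t ^ n ∂ν := by
  have htransform : ∀ n : ℕ,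
      ∀ᶠ x in atTop, ∫ t, t ^ n * (t - x)⁻¹ ∂μ = ∫ t, t ^ n * (t - x)⁻¹ ∂ν := by
    intro n
    induction n with
    | zero => simpa using h
    | succ n ih => exact (integral_pow_eq_and_eventually_eq_succ hμ hν ih).2
  exact (integral_pow_eq_and_eventually_eq_succ hμ hν (htransform n)).1

omit hν in
lemma abs_integral_sub_integral_le {f g : ℝ → ℝ} (hf : ContinuousOn f (Icc (-R) R))
    (hg : ContinuousOn g (Icc (-R) R)) {δ : ℝ} (hfg : ∀ t ∈ Icc (-R) R, |f t - g t| ≤ δ) :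
    |∫ t, f t ∂μ - ∫ t, g t ∂μ| ≤ δ * μ.real univ := by
  rw [← integral_sub (integrable_of_ae_mem_of_continuousOn isCompact_Icc hμ hf)
    (integrable_of_ae_mem_of_continuousOn isCompact_Icc hμ hg)]
  exact norm_integral_le_of_norm_le_const
    (hμ.mono fun t ht => (Real.norm_eq_abs _).trans_le (hfg t ht))

lemma integral_eval_eq_of_integral_pow_eq (h : ∀ n : ℕ, ∫ t, t ^ n ∂μ = ∫ t, t ^ n ∂ν)
    (p : ℝ[X]) : ∫ t, p.eval t ∂μ = ∫ t, p.eval t ∂ν := by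
  induction p using Polynomial.induction_on' with
  | add p q hp hq =>
    simp only [eval_add]
    rw [integral_add (integrable_of_ae_mem_of_continuousOn isCompact_Icc hμ p.continuousOn)
        (integrable_of_ae_mem_of_continuousOn isCompact_Icc hμ q.continuousOn),
      integral_add (integrable_of_ae_mem_of_continuousOn isCompact_Icc hν p.continuousOn)
        (integrable_of_ae_mem_of_continuousOn isCompact_Icc hν q.continuousOn), hp, hq]
  | monomial n a => simp only [eval_monomial, integral_const_mul, h]

lemma integral_eq_of_integral_pow_eq (h : ∀ n : ℕ, ∫ t, t ^ n ∂μ = ∫ t, t ^ n ∂ν)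
    {g : ℝ → ℝ} (hg : ContinuousOn g (Icc (-R) R)) : ∫ t, g t ∂μ = ∫ t, g t ∂ν := by
  refine eq_of_forall_dist_le fun ε hε => ?_
  have hmass : 0 < μ.real univ + ν.real univ + 1 := by positivity
  set δ := ε / (μ.real univ + ν.real univ + 1)
  have hδ : 0 < δ := by positivity
  obtain ⟨p, hp⟩ := exists_polynomial_near_of_continuousOn (-R) R g hg δ hδ
  have hgp : ∀ t ∈ Icc (-R) R, |g t - p.eval t| ≤ δ := fun t ht =>
    (abs_sub_comm _ _).trans_le (hp t ht).le
  have hμp := abs_integral_sub_integral_le hμ hg p.continuousOn hgp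
  have hνp := abs_integral_sub_integral_le hν hg p.continuousOn hgp
  rw [integral_eval_eq_of_integral_pow_eq hμ hν h] at hμp
  calc dist (∫ t, g t ∂μ) (∫ t, g t ∂ν)
      ≤ |∫ t, g t ∂μ - ∫ t, p.eval t ∂ν| + |∫ t, g t ∂ν - ∫ t, p.eval t ∂ν| := by
        rw [Real.dist_eq]
        linarith [abs_sub_le (∫ t, g t ∂μ) (∫ t, p.eval t ∂ν) (∫ t, g t ∂ν),
          abs_sub_comm (∫ t, p.eval t ∂ν) (∫ t, g t ∂ν)]
    _ ≤ δ * (μ.real univ + ν.real univ + 1) := by linarith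
    _ = ε := div_mul_cancel₀ ε hmass.ne'

lemma eq_of_integral_pow_eq (h : ∀ n : ℕ, ∫ t, t ^ n ∂μ = ∫ t, t ^ n ∂ν) : μ = ν :=
  ext_of_forall_integral_eq_of_IsFiniteMeasure fun f =>
    integral_eq_of_integral_pow_eq hμ hν h f.continuous.continuousOn

theorem eq_of_eventually_stieltjes_eq
    (h : ∀ᶠ x in atTop, ∫ t, (t - x)⁻¹ ∂μ = ∫ t, (t - x)⁻¹ ∂ν) : μ = ν :=
  eq_of_integral_pow_eq hμ hν (integral_pow_eq_of_eventually_stieltjes_eq hμ hν h)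

end StieltjesTransform

/-- a compactly supported probability measure on `ℝ` whose Stieltjes
transform satisfies `m(−x) = −m(x)` outside the support is symmetric: the pushforward
of `ν` under `t ↦ −t` equals `ν`; in particular `ν([a,b]) = ν([−b,−a])` for `a ≤ b`. -/
theorem statement12 (ν : Measure ℝ) [IsProbabilityMeasure ν] (R : ℝ)
    (hsupp : ν (Set.Icc (-R) R)ᶜ = 0)
    (hsym : ∀ x : ℝ, R < |x| →
      ∫ t, (t - (-x))⁻¹ ∂ν = -∫ t, (t - x)⁻¹ ∂ν) :
    Measure.map (fun t : ℝ => -t) ν = ν ∧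
    ∀ a b : ℝ, a ≤ b → ν (Set.Icc a b) = ν (Set.Icc (-b) (-a)) := by
  have hν : ∀ᵐ t ∂ν, t ∈ Icc (-R) R := mem_ae_iff.2 hsupp
  have hμ : ∀ᵐ t ∂(ν.map fun t => -t), t ∈ Icc (-R) R := by
    refine (ae_map_iff measurable_neg.aemeasurable measurableSet_Icc).2 ?_
    filter_upwards [hν] with t ht
    exact ⟨neg_le_neg ht.2, neg_le.1 ht.1⟩
  have hstieltjes : ∀ᶠ x in atTop,
      ∫ t, (t - x)⁻¹ ∂(ν.map fun t => -t) = ∫ t, (t - x)⁻¹ ∂ν := by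
    filter_upwards [eventually_gt_atTop R, eventually_ge_atTop 0] with x hRx hx
    have hneg : (fun t : ℝ => (-t - x)⁻¹) = fun t => -(t - -x)⁻¹ := by
      funext t
      rw [← inv_neg]
      ring_nf
    rw [integral_map measurable_neg.aemeasurable (by fun_prop), hneg, integral_neg,
      hsym x (by rwa [abs_of_nonneg hx]), neg_neg]
  have hmap := eq_of_eventually_stieltjes_eq hμ hν hstieltjes
  refine ⟨hmap, fun a b _ => ?_⟩
  nth_rw 1 [← hmap]
  rw [Measure.map_apply measurable_neg measurableSet_Icc]
  exact congrArg ν (Set.neg_Icc a b)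
end

section
/- (Gaussian Poincaré inequality.) Let X be a standard real Gaussian random variable and let f : ℝ → ℝ be continuously differentiable with f and f′ square-integrable with respect to the standard Gaussian measure. Then Var[f(X)] ≤ E[|f′(X)|²]. -/
/-!
Let `X, Y` be independent standard Gaussians. For `θ ∈ [0, π/2]` the rotated pair
`(X cos θ + Y sin θ, -X sin θ + Y cos θ)` is again a pair of independent standard Gaussians,
and its first coordinate runs from `X` to `Y`. Hence
`Var f(X) = E[f(X) (f(X) - f(Y))] = -∫₀^{π/2} E[∂_θ (f(X) f(X cos θ + Y sin θ))] dθ`.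
Rotating back and integrating by parts against the Gaussian in the second coordinate
(`E[W g(W)] = E[g'(W)]`) turns the inner expectation into
`-sin θ E[f'(X) f'(X cos θ - Y sin θ)]`, which is at most `sin θ E[f'(X)²]` by AM-GM and rotation
invariance; finally `∫₀^{π/2} sin = 1`.
-/

open MeasureTheory ProbabilityTheory

noncomputable section

open Real Set
open scoped NNReal

section Stein

variable {μ : ℝ} {v : ℝ≥0}

lemma hasDerivAt_gaussianPDFReal (x : ℝ) :
    HasDerivAt (gaussianPDFReal μ v) (-((x - μ) / v) * gaussianPDFReal μ v x) x := by
  have h : HasDerivAt (fun y : ℝ => -(y - μ) ^ 2 / (2 * v)) (-((x - μ) / v)) x := by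
    refine ((((hasDerivAt_id' x).sub_const μ).fun_pow 2).fun_neg.div_const _).congr_deriv ?_
    rcases eq_or_ne (v : ℝ) 0 with hv | hv
    · simp [hv]
    · field_simp
      ring
  rw [gaussianPDFReal_def]
  exact (h.exp.const_mul _).congr_deriv (by ring)

lemma integrable_gaussianReal_iff (hv : v ≠ 0) {g : ℝ → ℝ} :
    Integrable g (gaussianReal μ v) ↔ Integrable (fun x => gaussianPDFReal μ v x * g x) := by
  rw [gaussianReal_of_var_ne_zero _ hv, integrable_withDensity_iff_integrable_smul'
    (measurable_gaussianPDF μ v) (ae_of_all _ fun _ => gaussianPDF_lt_top)]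
  simp [toReal_gaussianPDF]

theorem integral_sub_mul_eq_integral_deriv_gaussianReal {g g' : ℝ → ℝ}
    (hderiv : ∀ x, HasDerivAt g (g' x) x) (hg : Integrable g (gaussianReal μ v))
    (hg' : Integrable g' (gaussianReal μ v))
    (hxg : Integrable (fun x => (x - μ) * g x) (gaussianReal μ v)) :
    ∫ x, (x - μ) * g x ∂gaussianReal μ v = v * ∫ x, g' x ∂gaussianReal μ v := by
  rcases eq_or_ne v 0 with rfl | hv
  · simp [gaussianReal_zero_var]
  rw [integrable_gaussianReal_iff hv] at hg hg' hxg
  rw [integral_gaussianReal_eq_integral_smul hv, integral_gaussianReal_eq_integral_smul hv]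
  simp only [smul_eq_mul]
  have hderiv' : ∀ x, HasDerivAt (fun y => v * (gaussianPDFReal μ v y * g y))
      (v * (gaussianPDFReal μ v x * g' x) - gaussianPDFReal μ v x * ((x - μ) * g x)) x := by
    intro x
    refine (((hasDerivAt_gaussianPDFReal x).mul (hderiv x)).const_mul (v : ℝ)).congr_deriv ?_
    field_simp
    ring
  have h0 := integral_eq_zero_of_hasDerivAt_of_integrable hderiv'
    ((hg'.const_mul _).sub hxg) (hg.const_mul _)
  rw [integral_sub (hg'.const_mul _) hxg, integral_const_mul] at h0
  linarith

theorem integral_snd_sub_mul_eq_integral_deriv_prod_gaussianReal {α : Type*}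
    [MeasurableSpace α] {ν : Measure α} [SFinite ν] {h h' : α × ℝ → ℝ}
    (hderiv : ∀ x y, HasDerivAt (fun y => h (x, y)) (h' (x, y)) y)
    (hh : Integrable h (ν.prod (gaussianReal μ v)))
    (hh' : Integrable h' (ν.prod (gaussianReal μ v)))
    (hyh : Integrable (fun p => (p.2 - μ) * h p) (ν.prod (gaussianReal μ v))) :
    ∫ p, (p.2 - μ) * h p ∂ν.prod (gaussianReal μ v)
      = v * ∫ p, h' p ∂ν.prod (gaussianReal μ v) := by
  rw [integral_prod _ hyh, integral_prod _ hh', ← integral_const_mul]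
  refine integral_congr_ae ?_
  filter_upwards [hh.prod_right_ae, hh'.prod_right_ae, hyh.prod_right_ae] with x h₁ h₂ h₃
  exact integral_sub_mul_eq_integral_deriv_gaussianReal (hderiv x) h₁ h₂ h₃

end Stein

section Rotation

variable {E : Type*} [NormedAddCommGroup E] [NormedSpace ℝ E]

lemma rotation_rotation_neg (θ : ℝ) (p : E × E) :
    ContinuousLinearMap.rotation θ (ContinuousLinearMap.rotation (-θ) p) = p := by
  obtain ⟨x, y⟩ := p
  simp only [ContinuousLinearMap.rotation_apply, cos_neg, sin_neg, Prod.mk.injEq]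
  constructor
  · linear_combination (norm := module) (sin_sq_add_cos_sq θ) • x
  · linear_combination (norm := module) (sin_sq_add_cos_sq θ) • y

variable [MeasurableSpace E] [BorelSpace E] [SecondCountableTopology E] [CompleteSpace E]
  {μ : Measure E} [IsGaussian μ]

lemma ProbabilityTheory.IsGaussian.measurePreserving_rotation (hμ : μ[id] = 0) (θ : ℝ) :
    MeasurePreserving (ContinuousLinearMap.rotation θ) (μ.prod μ) (μ.prod μ) :=
  ⟨(ContinuousLinearMap.rotation θ).continuous.measurable,
    IsGaussian.map_rotation_eq_self hμ θ⟩

end Rotation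

section L2

variable {α β : Type*} [MeasurableSpace α] [MeasurableSpace β] {μ : Measure α} {ν : Measure β}

lemma MeasureTheory.MeasurePreserving.integral_comp_of_aestronglyMeasurable {G : Type*}
    [NormedAddCommGroup G] [NormedSpace ℝ G] {f : α → β} (hf : MeasurePreserving f μ ν)
    {g : β → G} (hg : AEStronglyMeasurable g ν) : ∫ x, g (f x) ∂μ = ∫ y, g y ∂ν := by
  rw [← hf.map_eq] at hg ⊢
  exact (integral_map hf.aemeasurable hg).symm

lemma memLp_two_mul_prod {g : α → ℝ} {h : β → ℝ} (hg : MemLp g 2 μ)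
    (hh : MemLp h 2 ν) : MemLp (fun p : α × β => g p.1 * h p.2) 2 (μ.prod ν) := by
  refine (memLp_two_iff_integrable_sq (hg.1.comp_fst.mul hh.1.comp_snd)).2 ?_
  simpa only [Pi.mul_apply, mul_pow] using hg.integrable_sq.mul_prod hh.integrable_sq

lemma integral_norm_mul_le_of_memLp_two {u v : α → ℝ} (hu : MemLp u 2 μ) (hv : MemLp v 2 μ) :
    ∫ a, ‖u a * v a‖ ∂μ ≤ (∫ a, u a ^ 2 ∂μ + ∫ a, v a ^ 2 ∂μ) / 2 := by
  rw [← integral_add hu.integrable_sq hv.integrable_sq, ← integral_div]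
  refine integral_mono (hu.integrable_mul hv).norm
    ((hu.integrable_sq.add hv.integrable_sq).div_const 2) fun a => ?_
  simp only [norm_mul, Real.norm_eq_abs]
  nlinarith [sq_nonneg (|u a| - |v a|), sq_abs (u a), sq_abs (v a)]

lemma variance_eq_integral_mul_sub_prod [IsProbabilityMeasure μ] {g : α → ℝ}
    (hg : MemLp g 2 μ) :
    Var[g; μ] = ∫ p, g p.1 * (g p.1 - g p.2) ∂μ.prod μ := by
  have hsq : Integrable (fun p : α × α => g p.1 * g p.1) (μ.prod μ) :=
    (hg.integrable_mul hg).comp_fst μ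
  have hprod : Integrable (fun p : α × α => g p.1 * g p.2) (μ.prod μ) :=
    (hg.integrable one_le_two).mul_prod (hg.integrable one_le_two)
  simp_rw [mul_sub]
  rw [variance_eq_sub hg, integral_sub hsq hprod, integral_prod_mul,
    integral_fun_fst (fun x => g x * g x)]
  simp [sq]

end L2

section GaussianPoincare

local notation "γ" => gaussianReal 0 1
local notation "γ₂" => Measure.prod (gaussianReal 0 1) (gaussianReal 0 1)

lemma measurePreserving_rotation_gaussianReal (θ : ℝ) :
    MeasurePreserving (ContinuousLinearMap.rotation θ) γ₂ γ₂ :=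
  IsGaussian.measurePreserving_rotation (by simp [integral_id_gaussianReal]) θ

lemma measurePreserving_cos_mul_sub_sin_mul (θ : ℝ) :
    MeasurePreserving (fun p : ℝ × ℝ => cos θ * p.1 - sin θ * p.2) γ₂ γ := by
  simpa [Function.comp_def, ContinuousLinearMap.rotation_apply, sub_eq_add_neg] using
    measurePreserving_fst.comp (measurePreserving_rotation_gaussianReal (-θ))

lemma integral_mul_comp_cos_mul_sub_sin_mul_le {g : ℝ → ℝ} (hg : MemLp g 2 γ) (θ : ℝ) :
    ∫ p, g p.1 * g (cos θ * p.1 - sin θ * p.2) ∂γ₂ ≤ ∫ x, g x ^ 2 ∂γ := by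
  have hθ := measurePreserving_cos_mul_sub_sin_mul θ
  calc ∫ p, g p.1 * g (cos θ * p.1 - sin θ * p.2) ∂γ₂
      ≤ ∫ p, ‖g p.1 * g (cos θ * p.1 - sin θ * p.2)‖ ∂γ₂ :=
        (Real.le_norm_self _).trans (norm_integral_le_integral_norm _)
    _ ≤ (∫ p, g p.1 ^ 2 ∂γ₂ + ∫ p, g (cos θ * p.1 - sin θ * p.2) ^ 2 ∂γ₂) / 2 :=
        integral_norm_mul_le_of_memLp_two (hg.comp_fst γ) (hg.comp_measurePreserving hθ)
    _ = ∫ x, g x ^ 2 ∂γ := by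
        rw [integral_fun_fst (fun x => g x ^ 2),
          hθ.integral_comp_of_aestronglyMeasurable (g := fun x => g x ^ 2) (hg.1.pow 2)]
        simp

/-- `∂_θ (f x * f (cos θ * x + sin θ * y))` at `p = (x, y)`. -/
def interpolationDeriv (f : ℝ → ℝ) (θ : ℝ) (p : ℝ × ℝ) : ℝ :=
  f p.1 * (deriv f (cos θ * p.1 + sin θ * p.2) * (-sin θ * p.1 + cos θ * p.2))

lemma continuous_interpolationDeriv {f : ℝ → ℝ} (hf : ContDiff ℝ 1 f) :
    Continuous fun q : ℝ × (ℝ × ℝ) => interpolationDeriv f q.1 q.2 := by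
  have := hf.continuous_deriv le_rfl
  unfold interpolationDeriv
  fun_prop

lemma integral_interpolationDeriv {f : ℝ → ℝ} (hf : ContDiff ℝ 1 f) (p : ℝ × ℝ) :
    ∫ θ in 0..π / 2, interpolationDeriv f θ p = f p.1 * f p.2 - f p.1 * f p.1 := by
  have hderiv : ∀ θ, HasDerivAt (fun t => f p.1 * f (cos t * p.1 + sin t * p.2))
      (interpolationDeriv f θ p) θ := by
    intro θ
    have hc := ((hasDerivAt_cos θ).mul_const p.1).fun_add ((hasDerivAt_sin θ).mul_const p.2)
    exact ((((hf.differentiable one_ne_zero) _).hasDerivAt.comp θ hc).const_mul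
      (f p.1)).congr_deriv (by simp only [interpolationDeriv])
  have hcont : Continuous fun θ => interpolationDeriv f θ p :=
    (continuous_interpolationDeriv hf).comp (continuous_id.prodMk continuous_const)
  rw [intervalIntegral.integral_eq_sub_of_hasDerivAt (fun θ _ => hderiv θ)
    (hcont.intervalIntegrable _ _)]
  simp

lemma integrable_interpolationDeriv {f : ℝ → ℝ} (hf : ContDiff ℝ 1 f) (hf2 : MemLp f 2 γ)
    (hf'2 : MemLp (deriv f) 2 γ) (ν : Measure ℝ) [IsFiniteMeasure ν] :
    Integrable (fun q : ℝ × (ℝ × ℝ) => interpolationDeriv f q.1 q.2) (ν.prod γ₂) := by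
  have hG : MemLp (fun p : ℝ × ℝ => deriv f p.1 * p.2) 2 γ₂ :=
    memLp_two_mul_prod hf'2 (memLp_id_gaussianReal 2)
  have hθ : ∀ θ, MemLp
      (fun p => deriv f (cos θ * p.1 + sin θ * p.2) * (-sin θ * p.1 + cos θ * p.2)) 2 γ₂ :=
    fun θ => hG.comp_measurePreserving (measurePreserving_rotation_gaussianReal θ)
  set B := (∫ x, f x ^ 2 ∂γ + ∫ p, (deriv f p.1 * p.2) ^ 2 ∂γ₂) / 2
  have hbound : ∀ θ, ∫ p, ‖interpolationDeriv f θ p‖ ∂γ₂ ≤ B := by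
    intro θ
    have hrot :
        ∫ p, (deriv f (cos θ * p.1 + sin θ * p.2) * (-sin θ * p.1 + cos θ * p.2)) ^ 2 ∂γ₂
          = ∫ p, (deriv f p.1 * p.2) ^ 2 ∂γ₂ :=
      (measurePreserving_rotation_gaussianReal θ).integral_comp_of_aestronglyMeasurable
        (g := fun p => (deriv f p.1 * p.2) ^ 2) (hG.1.pow 2)
    refine (integral_norm_mul_le_of_memLp_two (hf2.comp_fst γ) (hθ θ)).trans_eq ?_
    rw [integral_fun_fst (fun x => f x ^ 2), hrot]
    simp [B]
  have hmeas := (continuous_interpolationDeriv hf).aestronglyMeasurable (μ := ν.prod γ₂)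
  refine (integrable_prod_iff hmeas).2 ⟨ae_of_all _ fun θ => ?_, ?_⟩
  · exact (hf2.comp_fst γ).integrable_mul (hθ θ)
  · refine (integrable_const B).mono' hmeas.norm.integral_prod_right' (ae_of_all _ fun θ => ?_)
    rw [Real.norm_of_nonneg (integral_nonneg fun _ => norm_nonneg _)]
    exact hbound θ

theorem integral_interpolationDeriv_eq {f : ℝ → ℝ} (hf : ContDiff ℝ 1 f) (hf2 : MemLp f 2 γ)
    (hf'2 : MemLp (deriv f) 2 γ) (θ : ℝ) :
    ∫ p, interpolationDeriv f θ p ∂γ₂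
      = -sin θ * ∫ p, deriv f p.1 * deriv f (cos θ * p.1 - sin θ * p.2) ∂γ₂ := by
  set L : ℝ × ℝ → ℝ := fun p => cos θ * p.1 - sin θ * p.2
  have hL := measurePreserving_cos_mul_sub_sin_mul θ
  have hrot (q : ℝ × ℝ) : interpolationDeriv f θ (ContinuousLinearMap.rotation (-θ) q)
      = (q.2 - 0) * (deriv f q.1 * f (L q)) := by
    have h₁ := congrArg Prod.fst (rotation_rotation_neg θ q)
    have h₂ := congrArg Prod.snd (rotation_rotation_neg θ q)
    have h₃ : (ContinuousLinearMap.rotation (-θ) q).1 = L q := by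
      simp [L, ContinuousLinearMap.rotation_apply, sub_eq_add_neg]
    simp only [ContinuousLinearMap.rotation_apply θ, smul_eq_mul] at h₁ h₂
    rw [interpolationDeriv, h₁, h₂, h₃]
    ring
  have hderiv (x y : ℝ) : HasDerivAt (fun y => deriv f x * f (L (x, y)))
      (deriv f x * (deriv f (L (x, y)) * -sin θ)) y := by
    have hy := ((hasDerivAt_id' y).const_mul (sin θ)).const_sub (cos θ * x)
    exact ((((hf.differentiable one_ne_zero) _).hasDerivAt.comp y hy).const_mul _).congr_deriv
      (by simp [L])
  have hA := hf'2.comp_fst γ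
  have hh : Integrable (fun q => deriv f q.1 * f (L q)) γ₂ :=
    hA.integrable_mul (hf2.comp_measurePreserving hL)
  have hh' : Integrable (fun q => deriv f q.1 * (deriv f (L q) * -sin θ)) γ₂ := by
    simpa only [Pi.mul_apply, Function.comp_apply, mul_assoc] using
      (hA.integrable_mul (hf'2.comp_measurePreserving hL)).mul_const (-sin θ)
  have hyh : Integrable (fun q => (q.2 - 0) * (deriv f q.1 * f (L q))) γ₂ := by
    refine ((memLp_two_mul_prod hf'2 (memLp_id_gaussianReal 2)).integrable_mul
      (hf2.comp_measurePreserving hL)).congr (ae_of_all _ fun q => ?_)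
    simp only [Pi.mul_apply, Function.comp_apply, id, sub_zero]
    ring
  have hK : Continuous (interpolationDeriv f θ) :=
    (continuous_interpolationDeriv hf).comp (continuous_const.prodMk continuous_id)
  rw [← (measurePreserving_rotation_gaussianReal (-θ)).integral_comp_of_aestronglyMeasurable
    hK.aestronglyMeasurable]
  simp_rw [hrot]
  rw [integral_snd_sub_mul_eq_integral_deriv_prod_gaussianReal hderiv hh hh' hyh,
    NNReal.coe_one, one_mul, ← integral_const_mul]
  congr with q
  ring

theorem variance_gaussianReal_eq_neg_integral_interpolationDeriv {f : ℝ → ℝ}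
    (hf : ContDiff ℝ 1 f) (hf2 : MemLp f 2 γ) (hf'2 : MemLp (deriv f) 2 γ) :
    Var[f; γ] = -∫ θ in 0..π / 2, ∫ p, interpolationDeriv f θ p ∂γ₂ := by
  have hint := integrable_interpolationDeriv hf hf2 hf'2 (volume.restrict (Ioc 0 (π / 2)))
  rw [variance_eq_integral_mul_sub_prod hf2, intervalIntegral.integral_of_le pi_div_two_pos.le,
    integral_integral_swap hint, ← integral_neg]
  refine integral_congr_ae (ae_of_all _ fun p => ?_)
  dsimp only
  rw [← intervalIntegral.integral_of_le pi_div_two_pos.le, integral_interpolationDeriv hf p]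
  ring

theorem variance_gaussianReal_le_integral_deriv_sq {f : ℝ → ℝ} (hf : ContDiff ℝ 1 f)
    (hf2 : MemLp f 2 γ) (hf'2 : MemLp (deriv f) 2 γ) :
    Var[f; γ] ≤ ∫ x, deriv f x ^ 2 ∂γ := by
  have hint :
      IntervalIntegrable (fun θ => -∫ p, interpolationDeriv f θ p ∂γ₂) volume 0 (π / 2) := by
    rw [intervalIntegrable_iff_integrableOn_Ioc_of_le pi_div_two_pos.le]
    exact (integrable_interpolationDeriv hf hf2 hf'2 _).integral_prod_left.neg
  rw [variance_gaussianReal_eq_neg_integral_interpolationDeriv hf hf2 hf'2,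
    ← intervalIntegral.integral_neg]
  calc ∫ θ in 0..π / 2, -∫ p, interpolationDeriv f θ p ∂γ₂
      ≤ ∫ θ in 0..π / 2, sin θ * ∫ x, deriv f x ^ 2 ∂γ := by
        refine intervalIntegral.integral_mono_on pi_div_two_pos.le hint
          ((continuous_sin.mul continuous_const).intervalIntegrable _ _) fun θ hθ => ?_
        rw [integral_interpolationDeriv_eq hf hf2 hf'2, neg_mul, neg_neg]
        exact mul_le_mul_of_nonneg_left (integral_mul_comp_cos_mul_sub_sin_mul_le hf'2 θ)
          (sin_nonneg_of_nonneg_of_le_pi hθ.1 (by linarith [hθ.2, pi_pos]))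
    _ = ∫ x, deriv f x ^ 2 ∂γ := by simp [intervalIntegral.integral_mul_const, integral_sin]

end GaussianPoincare

/-- Gaussian Poincaré inequality: if `X` is a standard real Gaussian
random variable and `f : ℝ → ℝ` is `C¹` with `f` and `f′` square-integrable against
the standard Gaussian measure, then `Var[f(X)] ≤ E[|f′(X)|²]`. -/
theorem statement14 {Ωs : Type*} [MeasurableSpace Ωs] (P : Measure Ωs)
    [IsProbabilityMeasure P] (X : Ωs → ℝ) (hX : Measurable X)
    (hlaw : P.map X = gaussianReal 0 1)
    (f : ℝ → ℝ) (hf : ContDiff ℝ 1 f)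
    (hf2 : MemLp f 2 (gaussianReal 0 1))
    (hf'2 : MemLp (deriv f) 2 (gaussianReal 0 1)) :
    variance (fun ω => f (X ω)) P ≤ ∫ ω, |deriv f (X ω)| ^ 2 ∂P := by
  have hXγ : MeasurePreserving X P (gaussianReal 0 1) := ⟨hX, hlaw⟩
  calc variance (fun ω => f (X ω)) P = Var[f; gaussianReal 0 1] :=
        hXγ.variance_fun_comp hf.continuous.aemeasurable
    _ ≤ ∫ x, deriv f x ^ 2 ∂gaussianReal 0 1 :=
        variance_gaussianReal_le_integral_deriv_sq hf hf2 hf'2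
    _ = ∫ ω, |deriv f (X ω)| ^ 2 ∂P := by
        simp_rw [sq_abs]
        exact (hXγ.integral_comp_of_aestronglyMeasurable
          ((hf.continuous_deriv le_rfl).pow 2).aestronglyMeasurable).symm

end
end
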